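/- Let H be a digraph (a structure with one binary relation E) and let x ∈ H be a ∀-canon, meaning: for all y, E(x,y) implies ∀z E(z,y), and E(y,x) implies ∀z E(y,z). Then for every prenex sentence φ of positive equality-free first-order logic, H ⊨ φ if and only if H ⊨ φ[∀/x], where φ[∀/x] is obtained from φ by instantiating every universally quantified variable as x. -/

import Mathlib

/-- Quantifier-free positive equality-free formulas over the digraph signature,
with `n` free variables. -/
inductive QF : ℕ → Type
  | atom {n : ℕ} (i j : Fin n) : QF n
  | conj {n : ℕ} (φ ψ : QF n) : QF n
  | disj {n : ℕ} (φ ψ : QF n) : QF n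

/-- Prenex positive equality-free first-order formulas over the digraph signature. -/
inductive PFO : ℕ → Type
  | qf  {n : ℕ} (φ : QF n) : PFO n
  | ex  {n : ℕ} (φ : PFO (n + 1)) : PFO n
  | all {n : ℕ} (φ : PFO (n + 1)) : PFO n

def QF.eval {V : Type*} (E : V → V → Prop) : {n : ℕ} → QF n → (Fin n → V) → Prop
  | _, .atom i j, ρ => E (ρ i) (ρ j)
  | _, .conj φ ψ, ρ => φ.eval E ρ ∧ ψ.eval E ρ
  | _, .disj φ ψ, ρ => φ.eval E ρ ∨ ψ.eval E ρ

/-- Evaluation of a prenex formula, where `u = some x` means every universal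
variable is instantiated as `x` (instead of being genuinely universally
quantified), and `e = some y` means every existential variable is instantiated
as `y`. `none` means genuine quantification. -/
def PFO.eval {V : Type*} (E : V → V → Prop) (u e : Option V) :
    {n : ℕ} → PFO n → (Fin n → V) → Prop
  | _, .qf φ, ρ => φ.eval E ρ
  | _, .ex φ, ρ =>
      match e with
      | none => ∃ v, φ.eval E u e (Fin.snoc ρ v)
      | some y => φ.eval E u e (Fin.snoc ρ y)
  | _, .all φ, ρ =>
      match u with
      | none => ∀ v, φ.eval E u e (Fin.snoc ρ v)
      | some x => φ.eval E u e (Fin.snoc ρ x)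

/-- Satisfaction of a prenex sentence by the digraph `(V, E)`, with optional
instantiation of the universal (`u`) and existential (`e`) variables. -/
def PFO.Sat {V : Type*} (E : V → V → Prop) (u e : Option V) (φ : PFO 0) : Prop :=
  φ.eval E u e (fun i => i.elim0)

/-!
Call `b` a dominator of `a` if every edge at `a` (in either direction) is also an edge at `b`.
Positive quantifier-free formulas are preserved when each variable is replaced by a dominator,
and a ∀-canon `x` is dominated by every vertex. So if `φ[∀/x]` holds, the existential witnesses
chosen for it still work when the universal variables range over arbitrary `v`, since each such
`v` dominates `x`. The converse is just the instance `v := x` of each universal quantifier.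
-/

def Dominates {V : Type*} (E : V → V → Prop) (a b : V) : Prop :=
  (∀ c, E a c → E b c) ∧ (∀ c, E c a → E c b)

section

variable {V : Type*} {E : V → V → Prop}

theorem Dominates.refl (a : V) : Dominates E a a :=
  ⟨fun _ h => h, fun _ h => h⟩

theorem dominates_of_forall_canon {x : V}
    (hx : ∀ y, (E x y → ∀ z, E z y) ∧ (E y x → ∀ z, E y z)) (v : V) : Dominates E x v :=
  ⟨fun c hc => (hx c).1 hc v, fun c hc => (hx c).2 hc v⟩

theorem Dominates.snoc {n : ℕ} {ρ ρ' : Fin n → V} (h : ∀ i, Dominates E (ρ i) (ρ' i))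
    {a b : V} (hab : Dominates E a b) (i : Fin (n + 1)) :
    Dominates E ((Fin.snoc ρ a : Fin (n + 1) → V) i) ((Fin.snoc ρ' b : Fin (n + 1) → V) i) := by
  induction i using Fin.lastCases with
  | last => simpa using hab
  | cast j => simpa using h j

theorem QF.eval_of_dominates {n : ℕ} (φ : QF n) {ρ ρ' : Fin n → V}
    (h : ∀ i, Dominates E (ρ i) (ρ' i)) (hφ : φ.eval E ρ) : φ.eval E ρ' := by
  induction φ with simp only [QF.eval] at hφ ⊢
  | atom i j => exact (h j).2 _ ((h i).1 _ hφ)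
  | conj φ ψ ihφ ihψ => exact ⟨ihφ hφ.1, ihψ hφ.2⟩
  | disj φ ψ ihφ ihψ => exact hφ.imp ihφ ihψ

theorem PFO.eval_some_of_eval_none (x : V) (e : Option V) {n : ℕ} (φ : PFO n)
    {ρ : Fin n → V} (hφ : φ.eval E none e ρ) : φ.eval E (some x) e ρ := by
  induction φ with
  | qf φ => exact hφ
  | ex φ ih =>
    cases e with
    | none => obtain ⟨v, hv⟩ := hφ; exact ⟨v, ih hv⟩
    | some y => exact ih hφ
  | all φ ih => exact ih (hφ x)

theorem PFO.eval_none_of_eval_some {x : V} (hx : ∀ v, Dominates E x v) (e : Option V)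
    {n : ℕ} (φ : PFO n) {ρ ρ' : Fin n → V} (h : ∀ i, Dominates E (ρ i) (ρ' i))
    (hφ : φ.eval E (some x) e ρ) : φ.eval E none e ρ' := by
  induction φ with
  | qf φ => exact QF.eval_of_dominates φ h hφ
  | ex φ ih =>
    cases e with
    | none =>
      obtain ⟨v, hv⟩ := hφ
      exact ⟨v, ih (Dominates.snoc h (.refl v)) hv⟩
    | some y => exact ih (Dominates.snoc h (.refl y)) hφ
  | all φ ih => exact fun v => ih (Dominates.snoc h (hx v)) hφ

end

/-- if `x` is a ∀-canon of the digraph `H = (V, E)`, then a prenex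
positive equality-free sentence holds in `H` iff it holds with every universal
variable instantiated as `x`. -/
theorem stmt1 {V : Type*} (E : V → V → Prop) (x : V)
    (hx : ∀ y, (E x y → ∀ z, E z y) ∧ (E y x → ∀ z, E y z)) :
    ∀ φ : PFO 0, PFO.Sat E none none φ ↔ PFO.Sat E (some x) none φ := fun φ =>
  ⟨PFO.eval_some_of_eval_none x none φ,
    PFO.eval_none_of_eval_some (dominates_of_forall_canon hx) none φ finZeroElim⟩
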